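/- arXiv:1907.05629 — 2 statements merged into one kernel-verified Lean document; each statement's English description precedes it below -/
import Mathlib

section
/- Let θ be an inner function and define H : H² → H² by Hf = P(z̄·θ·conj(f)) (the Hankel operator with symbol S*θ). Then H is a bounded antilinear operator satisfying S*H = HS, its range equals K_θ, its Schmidt subspace at s = 1 satisfies ker(H∘H − I) = K_θ, and the action of H on K_θ is the antilinear involution Hh = z̄·θ·conj(h) for every h ∈ K_θ. -/
open MeasureTheory Complex Filter

noncomputable section

namespace HankelSchmidt

instance fact_two_pi_pos : Fact (0 < 2 * Real.pi) := ⟨Real.two_pi_pos⟩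

/-- The circle `𝕋`, realized as `ℝ / 2πℤ`. -/
abbrev Tc : Type := AddCircle (2 * Real.pi)

/-- Normalized arc-length (Haar) measure on the circle. -/
abbrev muc : Measure Tc := AddCircle.haarAddCircle

/-- The space `L²(𝕋)`. -/
abbrev Ltwo := Lp ℂ 2 muc

/-- The Hardy space `H²`: the subspace of `L²(𝕋)` of functions whose Fourier coefficients
of negative index vanish. -/
def Hardy : Submodule ℂ Ltwo where
  carrier := {f | ∀ n : ℤ, n < 0 → fourierBasis.repr f n = 0}
  add_mem' := by
    intro a b ha hb n hn
    simp [map_add, lp.coeFn_add, ha n hn, hb n hn]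
  zero_mem' := by
    intro n hn
    simp
  smul_mem' := by
    intro c a ha n hn
    simp [_root_.map_smul, lp.coeFn_smul, ha n hn]

theorem hardy_isClosed : IsClosed (Hardy : Set Ltwo) := by
  have hset : (Hardy : Set Ltwo) =
      ⋂ (n : ℤ) (_ : n < 0), {f : Ltwo | fourierBasis.repr f n = 0} := by
    ext f
    simp only [Set.mem_iInter, Set.mem_setOf_eq]
    rfl
  rw [hset]
  refine isClosed_iInter fun n => isClosed_iInter fun hn => ?_
  have hcont : Continuous fun f : Ltwo => fourierBasis.repr f n := by
    have h1 : Continuous fun g : lp (fun _ : ℤ => ℂ) 2 => g n :=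
      (continuous_apply n).comp lp.uniformContinuous_coe.continuous
    exact h1.comp fourierBasis.repr.continuous
  exact isClosed_eq hcont continuous_const

instance : CompleteSpace (Hardy : Submodule ℂ Ltwo) := hardy_isClosed.completeSpace_coe

/-- The Hardy space as a type. -/
abbrev Hd := (Hardy : Submodule ℂ Ltwo)

/-- The orthogonal projection `P : L²(𝕋) → H²`. -/
def P2 : Ltwo → Hd := fun f => Hardy.orthogonalProjectionOnto f

/-- The orthogonal projection `P`, viewed as a map `L²(𝕋) → L²(𝕋)` with range `H²`. -/
def PL : Ltwo → Ltwo := fun f => ((P2 f : Hd) : Ltwo)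

theorem fourierCoeff_congr_ae {f g : Tc → ℂ} (h : f =ᵐ[muc] g) (n : ℤ) :
    fourierCoeff f n = fourierCoeff g n :=
  integral_congr_ae (h.mono fun x hx => by dsimp only; rw [hx])

theorem mem_Hardy_iff {f : Ltwo} :
    f ∈ Hardy ↔ ∀ n : ℤ, n < 0 → fourierCoeff (f : Tc → ℂ) n = 0 := by
  constructor
  · intro hf n hn; rw [← fourierBasis_repr]; exact hf n hn
  · intro hf n hn; rw [fourierBasis_repr]; exact hf n hn

/-- Pointwise multiplication by a bounded measurable function preserves `L²`. -/
theorem memLp_mul_of_bounded {g : Tc → ℂ} (hg : AEStronglyMeasurable g muc) {C : ℝ}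
    (hb : ∀ᵐ x ∂muc, ‖g x‖ ≤ C) (f : Ltwo) :
    MemLp (fun x => g x * (f : Tc → ℂ) x) 2 muc := by
  refine MemLp.of_le_mul (c := C) (Lp.memLp f) (hg.mul (Lp.aestronglyMeasurable f)) ?_
  filter_upwards [hb] with x hx
  rw [norm_mul]
  exact mul_le_mul_of_nonneg_right hx (norm_nonneg _)

theorem fourier_abs (n : ℤ) (x : Tc) : ‖fourier n x‖ = 1 := by
  rw [fourier_apply]; exact Circle.norm_coe _

theorem fourier_norm_one (n : ℤ) (x : Tc) : ‖fourier n x‖ ≤ 1 :=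
  le_of_eq (fourier_abs n x)

/-- Multiplication of an `L²` function by the monomial `z^n`. -/
def mulF (n : ℤ) (f : Ltwo) : Ltwo :=
  (memLp_mul_of_bounded ((map_continuous (fourier n)).aestronglyMeasurable)
    (Eventually.of_forall (fourier_norm_one n)) f).toLp _

theorem mulF_coe (n : ℤ) (f : Ltwo) :
    (mulF n f : Tc → ℂ) =ᵐ[muc] fun x => fourier n x * (f : Tc → ℂ) x :=
  MemLp.coeFn_toLp _

theorem fourierCoeff_fourier_mul (f : Tc → ℂ) (m n : ℤ) :
    fourierCoeff (fun x => fourier m x * f x) n = fourierCoeff f (n - m) := by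
  unfold fourierCoeff
  refine integral_congr_ae (Eventually.of_forall fun x => ?_)
  have h : @fourier (2 * Real.pi) (-(n - m)) x = fourier (-n) x * fourier m x := by
    rw [show -(n - m) = -n + m by ring, fourier_add]
  simp only [smul_eq_mul, h]
  ring

/-- The shift operator `S : H² → H²`, `(Sf)(z) = z·f(z)`. -/
def Sop (f : Hd) : Hd :=
  ⟨mulF 1 (f : Ltwo), by
    rw [mem_Hardy_iff]
    intro n hn
    rw [fourierCoeff_congr_ae (mulF_coe 1 (f : Ltwo)) n, fourierCoeff_fourier_mul]
    exact (mem_Hardy_iff.mp f.2) (n - 1) (by omega)⟩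

/-- The adjoint shift `S* : H² → H²`, `S*f = P(z̄·f)`. -/
def SstarOp (f : Hd) : Hd := P2 (mulF (-1) (f : Ltwo))

/-- The constant function `𝟙 ∈ H²`. -/
def oneH : Hd :=
  ⟨fourierLp 2 0, by
    rw [mem_Hardy_iff]
    intro n hn
    rw [← fourierBasis_repr]
    have h1 : (fourierLp (T := 2 * Real.pi) 2 0) = fourierBasis 0 := by
      rw [coe_fourierBasis]
    rw [h1, HilbertBasis.repr_self, lp.single_apply]
    rw [Pi.single_apply, if_neg (by omega : n ≠ 0)]⟩

/-- The inner product on `H²`, linear in the FIRST argument (the paper's convention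
`⟨f, g⟩ = ∫ f ḡ`). -/
def ipH (f g : Hd) : ℂ := @inner ℂ Ltwo _ (g : Ltwo) (f : Ltwo)

/-- The inner product on `L²(𝕋)`, linear in the FIRST argument. -/
def ipL (f g : Ltwo) : ℂ := @inner ℂ Ltwo _ g f

/-- `θ ∈ H²` is an inner function if `|θ(z)| = 1` a.e. on `𝕋`. -/
def IsInnerFn (θ : Hd) : Prop := ∀ᵐ x ∂muc, ‖((θ : Ltwo) : Tc → ℂ) x‖ = 1

/-- The set `θ·H² ⊆ L²(𝕋)` of pointwise a.e. products `θ·f`, `f ∈ H²`. -/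
def thetaHardy (θ : Hd) : Set Ltwo :=
  {g : Ltwo | ∃ f : Hd, (g : Tc → ℂ) =ᵐ[muc]
    fun x => ((θ : Ltwo) : Tc → ℂ) x * ((f : Ltwo) : Tc → ℂ) x}

/-- The model space `K_θ = H² ∩ (θH²)^⊥`, as a subset of `L²(𝕋)`. -/
def KspaceL (θ : Hd) : Set Ltwo :=
  {h : Ltwo | h ∈ Hardy ∧ ∀ g ∈ thetaHardy θ, ipL h g = 0}

/-- The model space `K_θ`, as a subset of `H²`. -/
def Kspace (θ : Hd) : Set Hd := {h : Hd | (h : Ltwo) ∈ KspaceL θ}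

/-- `p` is an isometric multiplier on `K_θ`: `p` is measurable and, for every `h ∈ K_θ`,
the pointwise product `p·h` lies in `H²` and has the same norm as `h`. -/
def IsIsomMult (p : Tc → ℂ) (θ : Hd) : Prop :=
  Measurable p ∧ ∀ h ∈ Kspace θ, ∃ g : Hd,
    ((g : Ltwo) : Tc → ℂ) =ᵐ[muc] (fun x => p x * ((h : Ltwo) : Tc → ℂ) x) ∧
    ‖(g : Ltwo)‖ = ‖(h : Ltwo)‖

/-- The subspace `p·K_θ = {p·h : h ∈ K_θ}` of `H²`. -/
def wModel (p : Tc → ℂ) (θ : Hd) : Set Hd :=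
  {g : Hd | ∃ h ∈ Kspace θ, ((g : Ltwo) : Tc → ℂ) =ᵐ[muc]
    fun x => p x * ((h : Ltwo) : Tc → ℂ) x}

/-- A bounded Hankel operator on `H²`: a continuous antilinear map `H : H² → H²`
satisfying `S*H = HS`. -/
def IsHankelOp (H : Hd →L⋆[ℂ] Hd) : Prop := ∀ f : Hd, SstarOp (H f) = H (Sop f)

/-- A bounded measurable symbol on the circle (an `L^∞` function). -/
def IsBddFn (u : Tc → ℂ) : Prop := Measurable u ∧ ∃ C : ℝ, ∀ᵐ x ∂muc, ‖u x‖ ≤ C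

theorem memLp_mul_conj {u : Tc → ℂ} (hu : IsBddFn u) (f : Ltwo) :
    MemLp (fun x => u x * (starRingEnd ℂ) ((f : Tc → ℂ) x)) 2 muc := by
  obtain ⟨hmeas, C, hC⟩ := hu
  refine MemLp.of_le_mul (c := C) (Lp.memLp f)
    (hmeas.aestronglyMeasurable.mul
      (continuous_star.comp_aestronglyMeasurable (Lp.aestronglyMeasurable f))) ?_
  filter_upwards [hC] with x hx
  rw [norm_mul, RCLike.norm_conj]
  exact mul_le_mul_of_nonneg_right hx (norm_nonneg _)

/-- The Hankel operator with symbol `u`: `H_u f = P(u·f̄)`, defined on all of `L²(𝕋)`. -/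
def hankelL (u : Tc → ℂ) (hu : IsBddFn u) : Ltwo → Ltwo :=
  fun f => PL ((memLp_mul_conj hu f).toLp _)

/-- The Möbius transformation `μ(z) = (α − z)/(1 − ᾱz)` of the unit disk. -/
def mobius (α z : ℂ) : ℂ := (α - z) / (1 - (starRingEnd ℂ) α * z)

/-- The point `e^{ix} ∈ ℂ` corresponding to `x ∈ 𝕋`. -/
def circlePt (x : Tc) : ℂ := fourier 1 x

/-- The Möbius transformation `μ` viewed as a self-map of `𝕋`. -/
def mobiusT (α : ℂ) (x : Tc) : Tc := ((Complex.arg (mobius α (circlePt x)) : ℝ) : Tc)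

/-- The weight `√(1 − |α|²)/(1 − ᾱz)` in the definition of `U_μ`. -/
def umuWeight (α : ℂ) (x : Tc) : ℂ :=
  (Real.sqrt (1 - ‖α‖ ^ 2) : ℂ) / (1 - (starRingEnd ℂ) α * circlePt x)

/-- `U` is the operator `U_μ`: `(U_μ f)(z) = (√(1 − |α|²)/(1 − ᾱz))·f(μ(z))` a.e. -/
def IsUmu (α : ℂ) (U : Ltwo → Ltwo) : Prop :=
  ∀ f : Ltwo, ((U f : Ltwo) : Tc → ℂ) =ᵐ[muc]
    fun x => umuWeight α x * (f : Tc → ℂ) (mobiusT α x)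


theorem memLp_sstarTheta {θ : Hd} (hθ : IsInnerFn θ) (f : Ltwo) :
    MemLp (fun x => (starRingEnd ℂ) (fourier 1 x) * ((θ : Ltwo) : Tc → ℂ) x *
      (starRingEnd ℂ) ((f : Tc → ℂ) x)) 2 muc := by
  refine MemLp.of_le_mul (c := 1) (Lp.memLp f) ?_ ?_
  · exact ((continuous_star.comp (map_continuous (fourier 1))).aestronglyMeasurable.mul
      (Lp.aestronglyMeasurable (θ : Ltwo))).mul
      (continuous_star.comp_aestronglyMeasurable (Lp.aestronglyMeasurable f))
  · filter_upwards [hθ] with x hx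
    have h1 : ‖(starRingEnd ℂ) (fourier 1 x)‖ = 1 := by
      rw [RCLike.norm_conj, fourier_abs]
    have h2 : ‖((θ : Ltwo) : Tc → ℂ) x‖ = 1 := by
      exact hx
    rw [norm_mul, norm_mul, h1, h2, RCLike.norm_conj, one_mul, one_mul]

/-- The Hankel operator with symbol `S*θ`: `H f = P(z̄·θ·f̄)`. -/
def hankelTheta (θ : Hd) (hθ : IsInnerFn θ) : Hd → Hd :=
  fun f => P2 ((memLp_sstarTheta hθ (f : Ltwo)).toLp _)

/-! Write `W f = z̄θf̄`; since `|z̄θ| = 1`, `W` is an antilinear isometric involution of `L²`, and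
`H = P ∘ W`. From `W(zf) = z̄·Wf` and the invariance of `(H²)^⊥` under `z̄` one gets `S*H = HS`.
For `g, f ∈ H²` the inner product of `θg` and `Wf` is, up to conjugation, the mean of `z g f`,
which is `0`; so the range of `H` lies in `K_θ`. Conversely the Fourier coefficient of index
`n < 0` of `W h` is, up to conjugation, the inner product of `h` and `z^(-n-1) θ ∈ θH²`, so `W` maps
`K_θ` into `H²`; there `H = W`, whence `H ∘ H = W ∘ W = id`. -/

open ComplexConjugate InnerProductSpace

section ConjMul

variable {α : Type*} [MeasurableSpace α] {μ : Measure α} {p : ENNReal}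

theorem inner_eq_integral_conj_mul (f g : Lp ℂ 2 μ) :
    ⟪f, g⟫_ℂ = ∫ x, conj ((f : α → ℂ) x) * (g : α → ℂ) x ∂μ := by
  simp only [L2.inner_def, RCLike.inner_apply, mul_comm]

theorem memLp_mul_conj_of_norm_eq_one {u : α → ℂ} (hum : AEStronglyMeasurable u μ)
    (hu : ∀ᵐ x ∂μ, ‖u x‖ = 1) (f : Lp ℂ p μ) :
    MemLp (fun x => u x * conj ((f : α → ℂ) x)) p μ :=
  (Lp.memLp f).of_le
    (hum.mul (continuous_star.comp_aestronglyMeasurable (Lp.aestronglyMeasurable f)))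
    (hu.mono fun x hx => by rw [norm_mul, hx, one_mul, RCLike.norm_conj])

def conjMul [Fact (1 ≤ p)] (u : α → ℂ) (hum : AEStronglyMeasurable u μ)
    (hu : ∀ᵐ x ∂μ, ‖u x‖ = 1) : Lp ℂ p μ →ₗᵢ⋆[ℂ] Lp ℂ p μ where
  toFun f := (memLp_mul_conj_of_norm_eq_one hum hu f).toLp _
  map_add' f g := by
    refine (MemLp.toLp_congr _ ((memLp_mul_conj_of_norm_eq_one hum hu f).add
      (memLp_mul_conj_of_norm_eq_one hum hu g)) ?_).trans (MemLp.toLp_add _ _)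
    filter_upwards [Lp.coeFn_add f g] with x hx
    simp only [hx, Pi.add_apply, map_add, mul_add]
  map_smul' c f := by
    refine (MemLp.toLp_congr _ ((memLp_mul_conj_of_norm_eq_one hum hu f).const_smul (conj c))
      ?_).trans (MemLp.toLp_const_smul _ _)
    filter_upwards [Lp.coeFn_smul c f] with x hx
    simp only [hx, Pi.smul_apply, smul_eq_mul, map_mul]
    ring
  norm_map' f := by
    show ‖(memLp_mul_conj_of_norm_eq_one hum hu f).toLp _‖ = ‖f‖
    rw [Lp.norm_toLp, Lp.norm_def]
    congr 1
    refine eLpNorm_congr_norm_ae ?_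
    filter_upwards [hu] with x hx
    rw [norm_mul, hx, one_mul, RCLike.norm_conj]

variable [Fact (1 ≤ p)] {u : α → ℂ} (hum : AEStronglyMeasurable u μ) (hu : ∀ᵐ x ∂μ, ‖u x‖ = 1)

theorem coeFn_conjMul (f : Lp ℂ p μ) :
    (conjMul u hum hu f : α → ℂ) =ᵐ[μ] fun x => u x * conj ((f : α → ℂ) x) :=
  MemLp.coeFn_toLp (memLp_mul_conj_of_norm_eq_one hum hu f)

theorem conjMul_conjMul (f : Lp ℂ p μ) : conjMul u hum hu (conjMul u hum hu f) = f := by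
  refine Lp.ext ?_
  filter_upwards [coeFn_conjMul hum hu (conjMul u hum hu f), coeFn_conjMul hum hu f, hu]
    with x hx hfx hux
  rw [hx, hfx, map_mul, conj_conj, ← mul_assoc, Complex.mul_conj', hux]
  simp

end ConjMul

section Fourier

variable {T : ℝ} [Fact (0 < T)]

theorem fourierCoeff_conj (f : AddCircle T → ℂ) (n : ℤ) :
    fourierCoeff (fun x => conj (f x)) n = conj (fourierCoeff f (-n)) := by
  unfold fourierCoeff
  rw [← integral_conj]
  refine integral_congr_ae (Eventually.of_forall fun x => ?_)
  simp only [smul_eq_mul, map_mul, neg_neg, ← fourier_neg]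

theorem inner_eq_zero_of_fourierCoeff {f g : Lp ℂ 2 (@AddCircle.haarAddCircle T _)}
    (h : ∀ n : ℤ, fourierCoeff (f : AddCircle T → ℂ) n = 0 ∨
      fourierCoeff (g : AddCircle T → ℂ) n = 0) :
    ⟪f, g⟫_ℂ = 0 := by
  rw [← fourierBasis.tsum_inner_mul_inner f g]
  refine (tsum_congr fun n => ?_).trans tsum_zero
  rw [← inner_conj_symm f, ← fourierBasis.repr_apply_apply, ← fourierBasis.repr_apply_apply,
    fourierBasis_repr, fourierBasis_repr]
  rcases h n with h0 | h0 <;> simp [h0]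

end Fourier

theorem fourierLp_mem_Hardy {m : ℤ} (hm : 0 ≤ m) : fourierLp 2 m ∈ Hardy := by
  intro n hn
  rw [← coe_fourierBasis, HilbertBasis.repr_self, lp.single_apply,
    Pi.single_eq_of_ne (by omega : n ≠ m)]

theorem mem_Hardy_orthogonal_iff {f : Ltwo} :
    f ∈ Hardyᗮ ↔ ∀ n : ℤ, 0 ≤ n → fourierCoeff (f : Tc → ℂ) n = 0 := by
  refine ⟨fun hf n hn => ?_, fun hf => (Submodule.mem_orthogonal _ _).2 fun g hg => ?_⟩
  · rw [← fourierBasis_repr, fourierBasis.repr_apply_apply, coe_fourierBasis]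
    exact (Submodule.mem_orthogonal _ _).1 hf _ (fourierLp_mem_Hardy hn)
  · refine inner_eq_zero_of_fourierCoeff fun n => ?_
    rcases lt_or_ge n 0 with hn | hn
    · exact Or.inl (mem_Hardy_iff.1 hg n hn)
    · exact Or.inr (hf n hn)

theorem fourierCoeff_mulF (m : ℤ) (f : Ltwo) (n : ℤ) :
    fourierCoeff (mulF m f : Tc → ℂ) n = fourierCoeff (f : Tc → ℂ) (n - m) := by
  rw [fourierCoeff_congr_ae (mulF_coe m f), fourierCoeff_fourier_mul]

theorem mulF_sub (m : ℤ) (f g : Ltwo) : mulF m (f - g) = mulF m f - mulF m g := by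
  refine Lp.ext ?_
  filter_upwards [mulF_coe m (f - g), mulF_coe m f, mulF_coe m g,
    Lp.coeFn_sub (mulF m f) (mulF m g), Lp.coeFn_sub f g] with x h h₁ h₂ h₁₂ hfg
  rw [h, h₁₂, Pi.sub_apply, h₁, h₂, hfg, Pi.sub_apply, mul_sub]

theorem mulF_mem_Hardy_orthogonal {m : ℤ} (hm : m ≤ 0) {f : Ltwo} (hf : f ∈ Hardyᗮ) :
    mulF m f ∈ Hardyᗮ :=
  mem_Hardy_orthogonal_iff.2 fun n hn => by
    rw [fourierCoeff_mulF]; exact mem_Hardy_orthogonal_iff.1 hf _ (by omega)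

theorem P2_mulF_PL {m : ℤ} (hm : m ≤ 0) (f : Ltwo) : P2 (mulF m (PL f)) = P2 (mulF m f) := by
  rw [eq_comm, ← sub_eq_zero, P2, P2, ← map_sub, ← mulF_sub,
    Submodule.orthogonalProjectionOnto_eq_zero_iff]
  exact mulF_mem_Hardy_orthogonal hm (Hardy.sub_starProjection_mem_orthogonal f)

theorem conjMul_mulF {u : Tc → ℂ} (hum : AEStronglyMeasurable u muc)
    (hu : ∀ᵐ x ∂muc, ‖u x‖ = 1) (m : ℤ) (f : Ltwo) :
    conjMul u hum hu (mulF m f) = mulF (-m) (conjMul u hum hu f) := by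
  refine Lp.ext ?_
  filter_upwards [coeFn_conjMul hum hu (mulF m f), mulF_coe m f,
    mulF_coe (-m) (conjMul u hum hu f), coeFn_conjMul hum hu f] with x h hm h' hf
  rw [h, hm, h', hf, map_mul, fourier_neg]
  ring

def fourierConj (m : ℤ) : Ltwo →ₗᵢ⋆[ℂ] Ltwo :=
  conjMul (fourier m) (map_continuous _).aestronglyMeasurable
    (Eventually.of_forall (fourier_abs m))

theorem coeFn_fourierConj (m : ℤ) (f : Ltwo) :
    (fourierConj m f : Tc → ℂ) =ᵐ[muc] fun x => fourier m x * conj ((f : Tc → ℂ) x) :=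
  coeFn_conjMul _ _ f

theorem fourierCoeff_fourierConj (m : ℤ) (f : Ltwo) (n : ℤ) :
    fourierCoeff (fourierConj m f : Tc → ℂ) n = conj (fourierCoeff (f : Tc → ℂ) (m - n)) := by
  rw [fourierCoeff_congr_ae (coeFn_fourierConj m f), fourierCoeff_fourier_mul, fourierCoeff_conj,
    neg_sub]

theorem fourierConj_mem_Hardy_orthogonal {m : ℤ} (hm : m < 0) {f : Ltwo} (hf : f ∈ Hardy) :
    fourierConj m f ∈ Hardyᗮ :=
  mem_Hardy_orthogonal_iff.2 fun n hn => by
    rw [fourierCoeff_fourierConj, mem_Hardy_iff.1 hf _ (by omega), map_zero]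

theorem thetaHardy_subset_Hardy (θ : Hd) : thetaHardy θ ⊆ Hardy := by
  rintro g ⟨f, hg⟩
  refine mem_Hardy_iff.2 fun n hn => ?_
  have hcoeff : fourierCoeff (g : Tc → ℂ) n = ⟪fourierConj n (θ : Ltwo), (f : Ltwo)⟫_ℂ := by
    rw [fourierCoeff_congr_ae hg, inner_eq_integral_conj_mul]
    refine integral_congr_ae ?_
    filter_upwards [coeFn_fourierConj n (θ : Ltwo)] with x hx
    rw [hx, map_mul, conj_conj, ← fourier_neg, smul_eq_mul, mul_assoc]
  rw [hcoeff]
  exact (Submodule.mem_orthogonal' _ _).1 (fourierConj_mem_Hardy_orthogonal hn θ.2) _ f.2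

section InnerFunction

variable {θ : Hd}

def sstarTheta (θ : Hd) (x : Tc) : ℂ := conj (fourier 1 x) * ((θ : Ltwo) : Tc → ℂ) x

theorem norm_sstarTheta (hθ : IsInnerFn θ) : ∀ᵐ x ∂muc, ‖sstarTheta θ x‖ = 1 :=
  hθ.mono fun x hx => by rw [sstarTheta, norm_mul, RCLike.norm_conj, fourier_abs, hx, one_mul]

theorem aestronglyMeasurable_sstarTheta (θ : Hd) : AEStronglyMeasurable (sstarTheta θ) muc :=
  (continuous_star.comp (map_continuous (fourier 1))).aestronglyMeasurable.mul
    (Lp.aestronglyMeasurable (θ : Ltwo))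

variable (θ) (hθ : IsInnerFn θ)

def thetaConj : Ltwo →ₗᵢ⋆[ℂ] Ltwo :=
  conjMul (sstarTheta θ) (aestronglyMeasurable_sstarTheta θ) (norm_sstarTheta hθ)

theorem coeFn_thetaConj (f : Ltwo) :
    (thetaConj θ hθ f : Tc → ℂ) =ᵐ[muc] fun x => sstarTheta θ x * conj ((f : Tc → ℂ) x) :=
  coeFn_conjMul _ _ f

/-- `⇑(hankelCLM θ hθ)` and `hankelTheta θ hθ` agree definitionally. -/
def hankelCLM : Hd →L⋆[ℂ] Hd :=
  Hardy.orthogonalProjectionOnto.comp ((thetaConj θ hθ).toContinuousLinearMap.comp Hardy.subtypeL)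

variable {θ}

theorem isHankelOp_hankelCLM : IsHankelOp (hankelCLM θ hθ) := fun f => by
  change P2 (mulF (-1) (PL (thetaConj θ hθ f))) = P2 (thetaConj θ hθ (mulF 1 f))
  rw [P2_mulF_PL (by norm_num), thetaConj, conjMul_mulF]

theorem inner_thetaConj_eq_zero {g f : Ltwo} (hg : g ∈ thetaHardy θ) (hf : f ∈ Hardy) :
    ⟪g, thetaConj θ hθ f⟫_ℂ = 0 := by
  obtain ⟨g', hg'⟩ := hg
  have key : ⟪g, thetaConj θ hθ f⟫_ℂ = conj ⟪fourierConj (-1) (g' : Ltwo), f⟫_ℂ := by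
    rw [inner_eq_integral_conj_mul, inner_eq_integral_conj_mul, ← integral_conj]
    refine integral_congr_ae ?_
    filter_upwards [hg', coeFn_thetaConj θ hθ f, coeFn_fourierConj (-1) (g' : Ltwo), hθ]
      with x hgx hfx hg'x hθx
    rw [hgx, hfx, hg'x, sstarTheta]
    have hθθ : conj (((θ : Ltwo) : Tc → ℂ) x) * ((θ : Ltwo) : Tc → ℂ) x = 1 := by
      rw [mul_comm, Complex.mul_conj', hθx]; simp
    simp only [map_mul, conj_conj, fourier_neg]
    linear_combination (conj (fourier 1 x) * conj (((g' : Ltwo) : Tc → ℂ) x) *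
      conj ((f : Tc → ℂ) x)) * hθθ
  rw [key, (Submodule.mem_orthogonal' _ _).1 (fourierConj_mem_Hardy_orthogonal (by norm_num) g'.2)
    _ hf, map_zero]

theorem hankelTheta_mem_Kspace (f : Hd) : hankelTheta θ hθ f ∈ Kspace θ := by
  refine ⟨(hankelTheta θ hθ f).2, fun g hg => ?_⟩
  change ⟪g, Hardy.starProjection (thetaConj θ hθ f)⟫_ℂ = 0
  rw [← Hardy.inner_starProjection_left_eq_right,
    Hardy.starProjection_eq_self_iff.2 (thetaHardy_subset_Hardy θ hg)]
  exact inner_thetaConj_eq_zero hθ hg f.2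

theorem thetaConj_mem_Hardy {h : Hd} (hh : h ∈ Kspace θ) : thetaConj θ hθ h ∈ Hardy := by
  refine mem_Hardy_iff.2 fun n hn => ?_
  have hθn : mulF (-(n + 1)) (θ : Ltwo) ∈ thetaHardy θ := by
    refine ⟨⟨fourierLp 2 (-(n + 1)), fourierLp_mem_Hardy (by omega)⟩, ?_⟩
    filter_upwards [mulF_coe (-(n + 1)) (θ : Ltwo), coeFn_fourierLp 2 (-(n + 1))] with x hx hx'
    rw [hx, hx', mul_comm]
  have hcoeff : fourierCoeff (thetaConj θ hθ h : Tc → ℂ) n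
      = conj ⟪mulF (-(n + 1)) (θ : Ltwo), (h : Ltwo)⟫_ℂ := by
    rw [fourierCoeff_congr_ae (coeFn_thetaConj θ hθ _), inner_eq_integral_conj_mul, ← integral_conj]
    refine integral_congr_ae ?_
    filter_upwards [mulF_coe (-(n + 1)) (θ : Ltwo)] with x hx
    rw [hx, sstarTheta, show -(n + 1) = -n + -1 by ring, fourier_add]
    simp only [smul_eq_mul, map_mul, conj_conj, ← fourier_neg]
    ring
  rw [hcoeff, show ⟪_, _⟫_ℂ = 0 from hh.2 _ hθn, map_zero]

theorem coe_hankelTheta_of_mem_Kspace {h : Hd} (hh : h ∈ Kspace θ) :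
    (hankelTheta θ hθ h : Ltwo) = thetaConj θ hθ h :=
  Hardy.starProjection_eq_self_iff.2 (thetaConj_mem_Hardy hθ hh)

theorem hankelTheta_hankelTheta_of_mem_Kspace {h : Hd} (hh : h ∈ Kspace θ) :
    hankelTheta θ hθ (hankelTheta θ hθ h) = h := by
  change P2 (thetaConj θ hθ (hankelTheta θ hθ h)) = h
  rw [coe_hankelTheta_of_mem_Kspace hθ hh, thetaConj, conjMul_conjMul]
  exact Hardy.orthogonalProjectionOnto_mem_subspace_eq_self h

end InnerFunction

/-- For an inner function `θ`, the Hankel operator `H_{S*θ}` is a bounded antilinear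
Hankel operator, its range is `K_θ`, its Schmidt subspace at `s = 1` is `K_θ`, and it acts
on `K_θ` as the antilinear involution `h ↦ z̄·θ·h̄`. -/
theorem hankel_of_inner_function (θ : Hd) (hθ : IsInnerFn θ) :
    (∀ f g : Hd, hankelTheta θ hθ (f + g) = hankelTheta θ hθ f + hankelTheta θ hθ g) ∧
    (∀ (c : ℂ) (f : Hd), hankelTheta θ hθ (c • f) = (starRingEnd ℂ) c • hankelTheta θ hθ f) ∧
    (∃ Cb : ℝ, ∀ f : Hd, ‖((hankelTheta θ hθ f : Hd) : Ltwo)‖ ≤ Cb * ‖(f : Ltwo)‖) ∧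
    (∀ f : Hd, SstarOp (hankelTheta θ hθ f) = hankelTheta θ hθ (Sop f)) ∧
    Set.range (hankelTheta θ hθ) = Kspace θ ∧
    {f : Hd | hankelTheta θ hθ (hankelTheta θ hθ f) = f} = Kspace θ ∧
    ∀ h ∈ Kspace θ, (((hankelTheta θ hθ h : Hd) : Ltwo) : Tc → ℂ) =ᵐ[muc]
      fun x => (starRingEnd ℂ) (fourier 1 x) * ((θ : Ltwo) : Tc → ℂ) x *
        (starRingEnd ℂ) (((h : Ltwo) : Tc → ℂ) x) := by
  have hinv := fun h => hankelTheta_hankelTheta_of_mem_Kspace hθ (h := h)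
  refine ⟨map_add (hankelCLM θ hθ), map_smulₛₗ (hankelCLM θ hθ),
    ⟨_, (hankelCLM θ hθ).le_opNorm⟩, isHankelOp_hankelCLM hθ, ?_, ?_, fun h hh => ?_⟩
  · exact (Set.range_subset_iff.2 (hankelTheta_mem_Kspace hθ)).antisymm
      fun h hh => ⟨_, hinv h hh⟩
  · ext f
    exact ⟨fun hf => hf ▸ hankelTheta_mem_Kspace hθ _, hinv f⟩
  · rw [coe_hankelTheta_of_mem_Kspace hθ hh]
    exact coeFn_thetaConj θ hθ _

end HankelSchmidt
end
end

section
/- Let θ be an inner function. Then S*(K_θ ∩ 𝟙^⊥) = K_θ ∩ (S*θ)^⊥; that is, the set {S*h : h ∈ K_θ, ⟨h, 𝟙⟩ = 0} equals the set {g ∈ K_θ : ⟨g, S*θ⟩ = 0}. -/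
open MeasureTheory Complex Filter

noncomputable section

namespace HankelSchmidt

/-! On `H²`, `S*f = z̄·(f − f̂(0))`, so `S*` is multiplication by `z̄` on `𝟙^⊥` and a left inverse
of `S`. Multiplication by `z^{±1}` is unitary on `L²`, and `z̄·θf = f̂(0)·z̄θ + θ·S*f` with
`S*f ∈ H²`; hence for `g ∈ K_θ`, `zg ⊥ θH²` iff `g ⊥ z̄θ`, iff `g ⊥ S*θ` because
`z̄θ − S*θ = θ̂(0)·z̄ ⊥ H²`. Both inclusions follow, with `h = zg` for the reverse one. -/

open scoped InnerProductSpace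

theorem mem_Hardy_iff_inner {f : Ltwo} :
    f ∈ Hardy ↔ ∀ n : ℤ, n < 0 → ⟪(fourierLp 2 n : Ltwo), f⟫_ℂ = 0 := by
  simp only [Hardy, Submodule.mem_mk, AddSubmonoid.mem_mk, AddSubsemigroup.mem_mk,
    Set.mem_ofPred_eq, HilbertBasis.repr_apply_apply, coe_fourierBasis]

theorem inner_fourierLp_fourierLp (m n : ℤ) :
    ⟪(fourierLp 2 m : Ltwo), fourierLp 2 n⟫_ℂ = if m = n then 1 else 0 :=
  orthonormal_iff_ite.mp orthonormal_fourier m n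

theorem mulF_mulF (m n : ℤ) (f : Ltwo) : mulF m (mulF n f) = mulF (m + n) f := by
  refine Lp.ext ?_
  filter_upwards [mulF_coe m (mulF n f), mulF_coe n f, mulF_coe (m + n) f] with x h₁ h₂ h₃
  rw [h₁, h₂, h₃, fourier_add, mul_assoc]

theorem mulF_zero (f : Ltwo) : mulF 0 f = f := by
  refine Lp.ext ?_
  filter_upwards [mulF_coe 0 f] with x hx
  rw [hx, fourier_zero, one_mul]

theorem mulF_neg_one_mulF_one (f : Ltwo) : mulF (-1) (mulF 1 f) = f := by
  rw [mulF_mulF, neg_add_cancel, mulF_zero]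

theorem mulF_fourierLp (m n : ℤ) : mulF m (fourierLp 2 n) = fourierLp 2 (m + n) := by
  refine Lp.ext ?_
  filter_upwards [mulF_coe m (fourierLp 2 n), coeFn_fourierLp 2 n, coeFn_fourierLp 2 (m + n)]
    with x h₁ h₂ h₃
  rw [h₁, h₂, h₃, fourier_add]

theorem inner_mulF_left (m : ℤ) (f g : Ltwo) : ⟪mulF m f, g⟫_ℂ = ⟪f, mulF (-m) g⟫_ℂ := by
  rw [L2.inner_def, L2.inner_def]
  refine integral_congr_ae ?_
  filter_upwards [mulF_coe m f, mulF_coe (-m) g] with x hf hg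
  simp only [hf, hg, RCLike.inner_apply, map_mul, fourier_neg]
  ring

theorem inner_mulF_right (m : ℤ) (f g : Ltwo) : ⟪f, mulF m g⟫_ℂ = ⟪mulF (-m) f, g⟫_ℂ := by
  rw [inner_mulF_left, neg_neg]

theorem inner_mulF_mulF (m : ℤ) (f g : Ltwo) : ⟪mulF m f, mulF m g⟫_ℂ = ⟪f, g⟫_ℂ := by
  rw [inner_mulF_left, mulF_mulF, neg_add_cancel, mulF_zero]

theorem coe_oneH : ((oneH : Hd) : Ltwo) = fourierLp 2 0 := rfl

theorem coe_Sop (f : Hd) : (Sop f : Ltwo) = mulF 1 f := rfl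

theorem coe_SstarOp (f : Hd) : (SstarOp f : Ltwo) =
    mulF (-1) f - ⟪(fourierLp 2 0 : Ltwo), f⟫_ℂ • fourierLp 2 (-1) := by
  set c := ⟪(fourierLp 2 0 : Ltwo), f⟫_ℂ
  have hmem : mulF (-1) f - c • fourierLp 2 (-1) ∈ Hardy := by
    refine mem_Hardy_iff_inner.mpr fun n hn => ?_
    rw [inner_sub_right, inner_smul_right, inner_mulF_right, neg_neg, mulF_fourierLp,
      inner_fourierLp_fourierLp]
    rcases (show n = -1 ∨ 1 + n < 0 by omega) with rfl | hn'
    · simp [c]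
    · rw [mem_Hardy_iff_inner.mp f.2 _ hn', if_neg (by omega), mul_zero, sub_zero]
  have hperp : ∀ w ∈ Hardy, ⟪mulF (-1) f - (mulF (-1) f - c • fourierLp 2 (-1)), w⟫_ℂ = 0 := by
    intro w hw
    rw [sub_sub_cancel, inner_smul_left, mem_Hardy_iff_inner.mp hw _ (by norm_num), mul_zero]
  rw [← Hardy.eq_starProjection_of_mem_of_inner_eq_zero hmem hperp, Hardy.starProjection_apply]
  rfl

theorem coe_SstarOp_of_inner_eq_zero {f : Hd} (hf : ⟪(fourierLp 2 0 : Ltwo), f⟫_ℂ = 0) :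
    (SstarOp f : Ltwo) = mulF (-1) f := by
  rw [coe_SstarOp, hf, zero_smul, sub_zero]

theorem inner_fourierLp_zero_Sop (g : Hd) : ⟪(fourierLp 2 0 : Ltwo), Sop g⟫_ℂ = 0 := by
  rw [coe_Sop, ← inner_mulF_mulF (-1), mulF_fourierLp, mulF_neg_one_mulF_one]
  exact mem_Hardy_iff_inner.mp g.2 _ (by norm_num)

theorem SstarOp_Sop (g : Hd) : SstarOp (Sop g) = g :=
  Subtype.ext <| (coe_SstarOp_of_inner_eq_zero (inner_fourierLp_zero_Sop g)).trans
    (mulF_neg_one_mulF_one _)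

theorem mem_Kspace_iff {θ h : Hd} :
    h ∈ Kspace θ ↔ ∀ w ∈ thetaHardy θ, ⟪w, (h : Ltwo)⟫_ℂ = 0 :=
  ⟨fun hh => hh.2, fun hh => ⟨h.2, hh⟩⟩

theorem self_mem_thetaHardy (θ : Hd) : (θ : Ltwo) ∈ thetaHardy θ := by
  refine ⟨oneH, ?_⟩
  filter_upwards [coeFn_fourierLp 2 0] with x hx
  rw [coe_oneH, hx, fourier_zero, mul_one]

theorem mulF_one_mem_thetaHardy {θ : Hd} {w : Ltwo} (hw : w ∈ thetaHardy θ) :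
    mulF 1 w ∈ thetaHardy θ := by
  obtain ⟨f, hf⟩ := hw
  refine ⟨Sop f, ?_⟩
  filter_upwards [mulF_coe 1 w, hf, mulF_coe 1 (f : Ltwo)] with x h₁ h₂ h₃
  rw [h₁, h₂, coe_Sop, h₃, mul_left_comm]

theorem mulF_neg_one_sub_mem_thetaHardy {θ f : Hd} {w : Ltwo}
    (hw : (w : Tc → ℂ) =ᵐ[muc] fun x => ((θ : Ltwo) : Tc → ℂ) x * ((f : Ltwo) : Tc → ℂ) x) :
    mulF (-1) w - ⟪(fourierLp 2 0 : Ltwo), f⟫_ℂ • mulF (-1) θ ∈ thetaHardy θ := by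
  set c := ⟪(fourierLp 2 0 : Ltwo), f⟫_ℂ
  have hS : ((SstarOp f : Ltwo) : Tc → ℂ) =ᵐ[muc]
      ⇑(mulF (-1) (f : Ltwo)) - ⇑(c • fourierLp 2 (-1) : Ltwo) := by
    rw [coe_SstarOp]
    exact Lp.coeFn_sub _ _
  refine ⟨SstarOp f, ?_⟩
  filter_upwards [Lp.coeFn_sub (mulF (-1) w) (c • mulF (-1) θ), Lp.coeFn_smul c (mulF (-1) θ),
    mulF_coe (-1) w, mulF_coe (-1) (θ : Ltwo), hw, hS,
    Lp.coeFn_smul c (fourierLp 2 (-1) : Ltwo), mulF_coe (-1) (f : Ltwo),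
    coeFn_fourierLp 2 (-1)] with x h₁ h₂ h₃ h₄ h₅ h₆ h₇ h₈ h₉
  simp only [h₁, Pi.sub_apply, h₂, Pi.smul_apply, h₃, h₄, h₅, h₆, h₇, h₈, h₉, smul_eq_mul]
  ring

theorem SstarOp_mem_Kspace {θ h : Hd} (hh : h ∈ Kspace θ)
    (h₀ : ⟪(fourierLp 2 0 : Ltwo), h⟫_ℂ = 0) : SstarOp h ∈ Kspace θ :=
  mem_Kspace_iff.mpr fun w hw => by
    rw [coe_SstarOp_of_inner_eq_zero h₀, inner_mulF_right, neg_neg]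
    exact hh.2 _ (mulF_one_mem_thetaHardy hw)

theorem inner_SstarOp_SstarOp_eq_zero {θ h : Hd} (hh : h ∈ Kspace θ)
    (h₀ : ⟪(fourierLp 2 0 : Ltwo), h⟫_ℂ = 0) :
    ⟪(SstarOp θ : Ltwo), SstarOp h⟫_ℂ = 0 := by
  rw [coe_SstarOp_of_inner_eq_zero h₀, coe_SstarOp θ, inner_sub_left, inner_mulF_mulF,
    inner_smul_left, inner_mulF_right, neg_neg, mulF_fourierLp, add_neg_cancel, h₀,
    mem_Kspace_iff.mp hh _ (self_mem_thetaHardy θ), mul_zero, sub_zero]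

theorem Sop_mem_Kspace {θ g : Hd} (hg : g ∈ Kspace θ)
    (hperp : ⟪(SstarOp θ : Ltwo), g⟫_ℂ = 0) : Sop g ∈ Kspace θ := by
  have hθ_perp : ⟪mulF (-1) θ, (g : Ltwo)⟫_ℂ = 0 := by
    rw [← sub_add_cancel (mulF (-1) (θ : Ltwo))
        (⟪(fourierLp 2 0 : Ltwo), (θ : Ltwo)⟫_ℂ • (fourierLp 2 (-1) : Ltwo)), ← coe_SstarOp,
      inner_add_left, inner_smul_left, hperp, mem_Hardy_iff_inner.mp g.2 _ (by norm_num),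
      mul_zero, add_zero]
  refine mem_Kspace_iff.mpr fun w ⟨f, hf⟩ => ?_
  rw [coe_Sop, inner_mulF_right,
    ← sub_add_cancel (mulF (-1) w) (⟪(fourierLp 2 0 : Ltwo), (f : Ltwo)⟫_ℂ • mulF (-1) θ),
    inner_add_left, inner_smul_left,
    mem_Kspace_iff.mp hg _ (mulF_neg_one_sub_mem_thetaHardy hf), hθ_perp,
    mul_zero, add_zero]

theorem sstar_image_Kspace_inter_one_perp_general (θ : Hd) :
    SstarOp '' {h : Hd | h ∈ Kspace θ ∧ ipH h oneH = 0} =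
      {g : Hd | g ∈ Kspace θ ∧ ipH g (SstarOp θ) = 0} := by
  ext g
  constructor
  · rintro ⟨h, ⟨hh, h₀⟩, rfl⟩
    exact ⟨SstarOp_mem_Kspace hh h₀, inner_SstarOp_SstarOp_eq_zero hh h₀⟩
  · rintro ⟨hg, hperp⟩
    exact ⟨Sop g, ⟨Sop_mem_Kspace hg hperp, inner_fourierLp_zero_Sop g⟩, SstarOp_Sop g⟩

/-- For an inner function `θ`, one has `S*(K_θ ∩ 𝟙^⊥) = K_θ ∩ (S*θ)^⊥`. -/
theorem sstar_image_Kspace_inter_one_perp (θ : Hd) (hθ : IsInnerFn θ) :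
    SstarOp '' {h : Hd | h ∈ Kspace θ ∧ ipH h oneH = 0} =
      {g : Hd | g ∈ Kspace θ ∧ ipH g (SstarOp θ) = 0} :=
  sstar_image_Kspace_inter_one_perp_general θ

end HankelSchmidt
end
end
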